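/- Let μ be a probability measure supported on a compact set F ⊂ ℝ \ [-1,1], and define v(z;μ) = ∫ log|1 - φ(z)φ(t)| dμ(t) for z ∈ ℂ \ [-1,1]. Then v(z;μ) = -(1/2) U^{β_E(μ) + τ_E}(z) + C for some constant C, where β_E(μ) is the balayage of μ onto E = [-1,1], τ_E is the arcsine measure of E, and U^ν(z) = ∫ log(1/|z-t|) dν(t) is the logarithmic potential. -/

import Mathlib

open MeasureTheory Complex

/-- The branch of `(z^2-1)^(1/2)` on `ℂ \ [-1,1]` with `(z^2-1)^(1/2)/z → 1` at `∞`. -/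
noncomputable def sqrtBr (z : ℂ) : ℂ := z * (1 - (z⁻¹) ^ 2) ^ ((1 : ℂ) / 2)

/-- The inverse Joukowsky map `φ(z) = z + (z^2-1)^(1/2)` (with `|φ| > 1` off `[-1,1]`). -/
noncomputable def phi (z : ℂ) : ℂ := z + sqrtBr z

/-- The segment `E = [-1,1] ⊂ ℂ`. -/
def Eseg : Set ℂ := {z : ℂ | z.im = 0 ∧ z.re ∈ Set.Icc (-1 : ℝ) 1}

/-- The logarithmic potential `U^ν(z) = ∫ log(1/|z-t|) dν(t)` of a measure `ν` on `ℝ`. -/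
noncomputable def Upot (ν : Measure ℝ) (z : ℂ) : ℝ :=
  ∫ t, Real.log (1 / ‖z - (t : ℂ)‖) ∂ν

/-- The logarithmic potential of the arcsine measure `dτ_E = (1/π)(1-x²)^{-1/2} dx`. -/
noncomputable def Utau (z : ℂ) : ℝ :=
  ∫ x in Set.Ioo (-1 : ℝ) 1,
    Real.log (1 / ‖z - (x : ℂ)‖) / (Real.pi * Real.sqrt (1 - x ^ 2))

/-- The Green function of `ℂ̄ \ [-1,1]`: `g_E(z,t) = log(|1-φ(z)φ(t)|/|φ(z)-φ(t)|)`. -/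
noncomputable def gE (z t : ℂ) : ℝ :=
  Real.log (‖1 - phi z * phi t‖ / ‖phi z - phi t‖)

/-! The relation `φ² - 2zφ + 1 = 0` gives
`(φ(z) - φ(t))(φ(z)φ(t) - 1) = 2(z - t)φ(z)φ(t)`, so whenever `z ≠ t`
`2 log|1 - φ(z)φ(t)| = g_E(z,t) + log 2 + log|z - t| + log|φ(z)| + log|φ(t)|`.
Integrating in `t` against `μ` and inserting the balayage relation for `∫ g_E(z,t) dμ(t)` leaves
`-U^ν(z) + log|φ(z)|` up to a constant, and `log|φ(z)| = log 2 - U^{τ_E}(z)`: the substitution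
`x = cos θ` turns `U^{τ_E}(z)` into the circle average of `log (1/|z - Re e|)`, and on `|e| = 1`
the factorization `2φ(z)(z - Re e) = (e - φ(z))(conj e - φ(z))` reduces it to the circle averages
of `log|e - a|` with `|a| > 1`, which equal `log|a|`.

For non-real `z` we have `z ≠ t` for every `t ∈ F`; both sides are continuous on `ℂ \ [-1,1]`,
so the identity extends to the real points `|z| > 1`. -/

open Set ComplexConjugate
open scoped Real

lemma setIntegral_Ioo_div_pi_mul_sqrt (f : ℝ → ℝ) :
    ∫ x in Ioo (-1 : ℝ) 1, f x / (π * √(1 - x ^ 2)) =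
      π⁻¹ * ∫ θ in 0..π, f (Real.cos θ) := by
  have hsub := integral_image_eq_integral_abs_deriv_smul measurableSet_Icc
    (fun θ _ => (Real.hasDerivAt_cos θ).hasDerivWithinAt) Real.injOn_cos
    (fun x => f x / (π * √(1 - x ^ 2)))
  rw [Real.bijOn_cos.image_eq, integral_Icc_eq_integral_Ioo, integral_Icc_eq_integral_Ioo] at hsub
  rw [hsub, intervalIntegral.integral_of_le Real.pi_pos.le, integral_Ioc_eq_integral_Ioo,
    ← integral_const_mul]
  refine setIntegral_congr_fun measurableSet_Ioo fun θ hθ => ?_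
  have hsin : 0 < Real.sin θ := Real.sin_pos_of_pos_of_lt_pi hθ.1 hθ.2
  have hsqrt : √(1 - Real.cos θ ^ 2) = Real.sin θ := by
    rw [← Real.sin_sq, Real.sqrt_sq hsin.le]
  simp only [hsqrt, abs_neg, abs_of_pos hsin, smul_eq_mul]
  field_simp

lemma integral_comp_cos_zero_two_pi {g : ℝ → ℝ} (hg : ContinuousOn g (Icc (-1) 1)) :
    ∫ θ in 0..2 * π, g (Real.cos θ) = 2 * ∫ θ in 0..π, g (Real.cos θ) := by
  have hcont : Continuous fun θ => g (Real.cos θ) :=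
    hg.comp_continuous Real.continuous_cos fun θ =>
      ⟨Real.neg_one_le_cos θ, Real.cos_le_one θ⟩
  have hsymm : ∫ θ in π..2 * π, g (Real.cos θ) = ∫ θ in 0..π, g (Real.cos θ) := by
    have := intervalIntegral.integral_comp_sub_left (fun θ => g (Real.cos θ))
      (a := 0) (b := π) (2 * π)
    simp only [Real.cos_two_pi_sub] at this
    rw [this]
    ring_nf
  rw [← intervalIntegral.integral_add_adjacent_intervals (b := π) (hcont.intervalIntegrable _ _)
    (hcont.intervalIntegrable _ _), hsymm]
  ring

lemma setIntegral_Ioo_div_pi_mul_sqrt_eq_circleAverage {f : ℝ → ℝ}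
    (hf : ContinuousOn f (Icc (-1) 1)) :
    ∫ x in Ioo (-1 : ℝ) 1, f x / (π * √(1 - x ^ 2)) =
      Real.circleAverage (fun e => f e.re) 0 1 := by
  have hre (θ : ℝ) : (circleMap 0 1 θ).re = Real.cos θ := by
    simp [circleMap, exp_ofReal_mul_I_re]
  rw [setIntegral_Ioo_div_pi_mul_sqrt, Real.circleAverage_def, smul_eq_mul]
  simp only [hre]
  rw [integral_comp_cos_zero_two_pi hf]
  field_simp

section ParametricIntegral

variable {α X : Type*} [TopologicalSpace α] [T2Space α] [MeasurableSpace α]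
  [OpensMeasurableSpace α]
  {μ : Measure α} [IsFiniteMeasure μ] {S : Set α}

lemma ContinuousOn.integrable_of_ae_mem {f : α → ℝ} (hf : ContinuousOn f S) (hS : IsCompact S)
    (hμ : ∀ᵐ t ∂μ, t ∈ S) : Integrable f μ := by
  rw [← Measure.restrict_eq_self_of_ae_mem hμ]
  exact hf.integrableOn_compact hS

lemma continuousOn_integral_of_continuousOn_prod [TopologicalSpace X] [FirstCountableTopology X]
    [LocallyCompactSpace X] {U : Set X} (hU : IsOpen U) (hS : IsCompact S)
    (hμ : ∀ᵐ t ∂μ, t ∈ S)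
    {f : X → α → ℝ} (hf : ContinuousOn (Function.uncurry f) (U ×ˢ S)) :
    ContinuousOn (fun x => ∫ t, f x t ∂μ) U := by
  intro x hx
  obtain ⟨K, hKx, hKU, hK⟩ := local_compact_nhds (hU.mem_nhds hx)
  obtain ⟨M, hM⟩ :=
    (hK.prod hS).exists_bound_of_continuousOn (hf.mono (prod_mono hKU subset_rfl))
  have hslice {y : X} (hy : y ∈ U) : ContinuousOn (f y) S :=
    hf.comp (Continuous.prodMk_right y).continuousOn fun t ht => ⟨hy, ht⟩
  refine (continuousAt_of_dominated (bound := fun _ => M) ?_ ?_ (integrable_const M) ?_)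
    |>.continuousWithinAt
  · filter_upwards [hKx] with y hy
    exact ((hslice (hKU hy)).integrable_of_ae_mem hS hμ).aestronglyMeasurable
  · filter_upwards [hKx] with y hy
    filter_upwards [hμ] with t ht
    exact hM (y, t) ⟨hy, ht⟩
  · filter_upwards [hμ] with t ht
    have hcont : ContinuousOn (fun y => f y t) U :=
      hf.comp (Continuous.prodMk_left t).continuousOn fun y hy => ⟨hy, ht⟩
    exact hcont.continuousAt (hU.mem_nhds hx)

end ParametricIntegral

namespace Joukowsky

variable {z w : ℂ}

lemma isClosed_Eseg : IsClosed Eseg :=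
  (isClosed_eq continuous_im continuous_const).inter (isClosed_Icc.preimage continuous_re)

lemma notMem_Eseg_of_im_ne_zero (hz : z.im ≠ 0) : z ∉ Eseg := fun h => hz h.1

lemma ofReal_notMem_Eseg {x : ℝ} (hx : x ∉ Icc (-1 : ℝ) 1) : (x : ℂ) ∉ Eseg :=
  fun h => hx (by simpa using h.2)

lemma ne_zero_of_notMem_Eseg (hz : z ∉ Eseg) : z ≠ 0 := by
  rintro rfl
  exact hz ⟨rfl, by norm_num⟩

lemma ofReal_mem_Eseg {x : ℝ} (hx : x ∈ Icc (-1 : ℝ) 1) : (x : ℂ) ∈ Eseg :=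
  ⟨by simp, by simpa⟩

lemma sub_ofReal_ne_zero (hz : z ∉ Eseg) {x : ℝ} (hx : x ∈ Icc (-1 : ℝ) 1) : z - x ≠ 0 :=
  sub_ne_zero.2 fun h => hz (h ▸ ofReal_mem_Eseg hx)

lemma one_sub_inv_sq_mem_slitPlane (hz : z ∉ Eseg) : 1 - z⁻¹ ^ 2 ∈ slitPlane := by
  set u := z⁻¹ with hu
  rw [mem_slitPlane_iff, sub_re, sub_im, one_re, one_im, sq, mul_re, mul_im]
  by_contra! h
  obtain ⟨hre, him⟩ := h
  have hu_im : u.im = 0 := by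
    rcases mul_eq_zero.1 (by linarith : u.re * u.im = 0) with h | h
    · rw [h] at hre
      nlinarith
    · exact h
  have hu_re : 1 ≤ |u.re| := by
    rw [hu_im] at hre
    nlinarith [sq_abs u.re, abs_nonneg u.re]
  have hzu : z = ((u.re⁻¹ : ℝ) : ℂ) := by
    rw [← inv_inv z, ← hu, ← Complex.re_add_im u, hu_im]
    simp
  apply hz
  rw [hzu]
  refine ⟨by simp, ?_⟩
  simp only [ofReal_re, mem_Icc, ← abs_le, abs_inv]
  exact inv_le_one_of_one_le₀ hu_re

lemma sqrtBr_sq (hz : z ∉ Eseg) : sqrtBr z ^ 2 = z ^ 2 - 1 := by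
  have hz0 := ne_zero_of_notMem_Eseg hz
  have hsq : ((1 - z⁻¹ ^ 2) ^ ((1 : ℂ) / 2)) ^ 2 = 1 - z⁻¹ ^ 2 := by
    rw [sq, ← cpow_add _ _ (slitPlane_ne_zero (one_sub_inv_sq_mem_slitPlane hz))]
    norm_num
  rw [sqrtBr, mul_pow, hsq]
  field_simp

lemma phi_sq_sub_two_mul_add_one (hz : z ∉ Eseg) : phi z ^ 2 - 2 * z * phi z + 1 = 0 := by
  rw [phi]
  linear_combination sqrtBr_sq hz

lemma one_lt_normSq_add_norm_sq_sub_one (hz : z ∉ Eseg) : 1 < normSq z + ‖z ^ 2 - 1‖ := by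
  have hid : ‖z ^ 2 - 1‖ ^ 2 = (1 - normSq z) ^ 2 + 4 * z.im ^ 2 := by
    rw [Complex.sq_norm, normSq_apply, normSq_apply]
    simp only [sub_re, sub_im, sq, mul_re, mul_im, one_re, one_im]
    ring
  have hnn := norm_nonneg (z ^ 2 - 1)
  by_cases him : z.im = 0
  · have hx : 1 < z.re ^ 2 := by
      have : z.re ∉ Icc (-1 : ℝ) 1 := fun h => hz ⟨him, h⟩
      rw [mem_Icc, not_and_or, not_le, not_le] at this
      rcases this with h | h <;> nlinarith
    have : normSq z = z.re ^ 2 := by rw [normSq_apply, him]; ring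
    linarith
  · nlinarith [sq_nonneg (1 - normSq z - ‖z ^ 2 - 1‖), pow_pos (sq_pos_of_ne_zero him) 1]

lemma one_lt_norm_phi (hz : z ∉ Eseg) : 1 < ‖phi z‖ := by
  have hs : normSq (sqrtBr z) = ‖z ^ 2 - 1‖ := by
    rw [← Complex.sq_norm, ← norm_pow, sqrtBr_sq hz]
  -- the principal square root in `sqrtBr` has nonnegative real part
  have hcross : 0 ≤ (z * conj (sqrtBr z)).re := by
    rw [sqrtBr, map_mul, ← mul_assoc, mul_conj, re_ofReal_mul, conj_re, one_div, cpow_inv_two_re]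
    exact mul_nonneg (normSq_nonneg z) (Real.sqrt_nonneg _)
  have hphi : ‖phi z‖ ^ 2 = normSq z + normSq (sqrtBr z) + 2 * (z * conj (sqrtBr z)).re := by
    rw [phi, Complex.sq_norm, normSq_add]
  nlinarith [norm_nonneg (phi z), one_lt_normSq_add_norm_sq_sub_one hz]

lemma phi_ne_zero (hz : z ∉ Eseg) : phi z ≠ 0 :=
  norm_pos_iff.1 (one_pos.trans (one_lt_norm_phi hz))

lemma continuousOn_phi : ContinuousOn phi Esegᶜ := by
  intro z hz
  have hz0 := ne_zero_of_notMem_Eseg hz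
  refine (continuousAt_id.add (continuousAt_id.mul ?_)).continuousWithinAt
  exact (continuousAt_const.sub ((continuousAt_id.inv₀ hz0).pow 2)).cpow continuousAt_const
    (one_sub_inv_sq_mem_slitPlane hz)

lemma phi_sub_mul_phi_mul_sub_one (hz : z ∉ Eseg) (hw : w ∉ Eseg) :
    (phi z - phi w) * (phi z * phi w - 1) = 2 * (z - w) * phi z * phi w := by
  linear_combination phi w * phi_sq_sub_two_mul_add_one hz - phi z * phi_sq_sub_two_mul_add_one hw

lemma one_sub_phi_mul_ne_zero (hz : z ∉ Eseg) (hw : w ∉ Eseg) : 1 - phi z * phi w ≠ 0 := by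
  have h1 := one_lt_norm_phi hz
  have h2 := one_lt_norm_phi hw
  have h3 := norm_sub_norm_le (phi z * phi w) 1
  rw [norm_mul, norm_one] at h3
  rw [← norm_pos_iff, norm_sub_rev]
  nlinarith

lemma two_mul_log_norm_one_sub_phi_mul (hz : z ∉ Eseg) (hw : w ∉ Eseg) (hzw : z ≠ w) :
    2 * Real.log ‖1 - phi z * phi w‖ =
      gE z w + Real.log 2 + Real.log ‖z - w‖ + Real.log ‖phi z‖ + Real.log ‖phi w‖ := by
  have hprod := phi_sub_mul_phi_mul_sub_one hz hw
  have hsub : ‖z - w‖ ≠ 0 := norm_ne_zero_iff.2 (sub_ne_zero.2 hzw)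
  have hz' : ‖phi z‖ ≠ 0 := norm_ne_zero_iff.2 (phi_ne_zero hz)
  have hw' : ‖phi w‖ ≠ 0 := norm_ne_zero_iff.2 (phi_ne_zero hw)
  have hone : ‖1 - phi z * phi w‖ ≠ 0 := norm_ne_zero_iff.2 (one_sub_phi_mul_ne_zero hz hw)
  have hdiff : ‖phi z - phi w‖ ≠ 0 := by
    have hrhs : 2 * (z - w) * phi z * phi w ≠ 0 := by
      simp [sub_eq_zero, hzw, phi_ne_zero hz, phi_ne_zero hw]
    exact norm_ne_zero_iff.2 (left_ne_zero_of_mul (hprod ▸ hrhs))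
  have hlog := congrArg (fun u : ℂ => Real.log ‖u‖) hprod
  simp only [norm_mul, ← norm_neg (phi z * phi w - 1), neg_sub, Complex.norm_two] at hlog
  rw [Real.log_mul hdiff hone, Real.log_mul (by positivity) hw', Real.log_mul (by positivity) hz',
    Real.log_mul two_ne_zero hsub] at hlog
  rw [gE, Real.log_div hone hdiff]
  linarith

lemma norm_sub_phi_mul_norm_sub_conj_phi (hz : z ∉ Eseg) {e : ℂ} (he : ‖e‖ = 1) :
    ‖e - phi z‖ * ‖e - conj (phi z)‖ = 2 * ‖phi z‖ * ‖z - e.re‖ := by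
  have hconj : ‖e - conj (phi z)‖ = ‖conj e - phi z‖ := by
    rw [← norm_conj, map_sub, conj_conj]
  have hee : e * conj e = 1 := by rw [mul_conj, normSq_eq_norm_sq, he]; norm_num
  have hre : e + conj e = 2 * (e.re : ℂ) := by rw [add_conj]; push_cast; ring
  have hprod : (e - phi z) * (conj e - phi z) = 2 * phi z * (z - e.re) := by
    linear_combination hee + phi_sq_sub_two_mul_add_one hz - phi z * hre
  rw [hconj, ← norm_mul, hprod, norm_mul, norm_mul, Complex.norm_two]

lemma log_inv_norm_sub_re (hz : z ∉ Eseg) {e : ℂ} (he : ‖e‖ = 1) :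
    Real.log (1 / ‖z - e.re‖) =
      Real.log 2 + Real.log ‖phi z‖ - Real.log ‖e - phi z‖ -
        Real.log ‖e - conj (phi z)‖ := by
  have hφ := one_lt_norm_phi hz
  have h1 : ‖e - phi z‖ ≠ 0 := by
    have := norm_sub_norm_le (phi z) e
    rw [norm_sub_rev]; linarith
  have h2 : ‖e - conj (phi z)‖ ≠ 0 := by
    have := norm_sub_norm_le (conj (phi z)) e
    rw [norm_conj, he] at this
    rw [norm_sub_rev]; linarith
  have hid := norm_sub_phi_mul_norm_sub_conj_phi hz he
  have h3 : ‖z - e.re‖ ≠ 0 := by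
    intro h; rw [h, mul_zero] at hid; exact mul_ne_zero h1 h2 hid
  have hlog := congrArg Real.log hid
  rw [Real.log_mul h1 h2, Real.log_mul (by positivity) h3, Real.log_mul two_ne_zero (by positivity)]
    at hlog
  rw [one_div, Real.log_inv]
  linarith

lemma Utau_eq (hz : z ∉ Eseg) : Utau z = Real.log 2 - Real.log ‖phi z‖ := by
  have hf : ContinuousOn (fun x : ℝ => Real.log (1 / ‖z - x‖)) (Icc (-1) 1) := by
    intro x hx
    have hne := sub_ofReal_ne_zero hz hx
    refine ContinuousAt.continuousWithinAt ?_
    fun_prop (disch := simpa)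
  have hφ := one_lt_norm_phi hz
  rw [Utau, setIntegral_Ioo_div_pi_mul_sqrt_eq_circleAverage hf,
    Real.circleAverage_congr_sphere (fun e he => log_inv_norm_sub_re hz (by simpa using he)),
    Real.circleAverage_fun_sub (by fun_prop) (circleIntegrable_log_norm_sub_const 1),
    Real.circleAverage_fun_sub (circleIntegrable_const _ 0 1)
      (circleIntegrable_log_norm_sub_const 1),
    Real.circleAverage_const, circleAverage_log_norm_sub_const₂ hφ,
    circleAverage_log_norm_sub_const₂ (by rwa [norm_conj]), norm_conj]
  ring

lemma continuousOn_Upot {ν : Measure ℝ} [IsFiniteMeasure ν]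
    (hν : ∀ᵐ t ∂ν, t ∈ Icc (-1 : ℝ) 1) : ContinuousOn (Upot ν) Esegᶜ := by
  apply continuousOn_integral_of_continuousOn_prod isClosed_Eseg.isOpen_compl isCompact_Icc hν
  rintro ⟨z, t⟩ ⟨hz, ht⟩
  have hne := sub_ofReal_ne_zero hz ht
  refine ContinuousAt.continuousWithinAt ?_
  fun_prop (disch := simpa)

lemma continuousOn_Utau : ContinuousOn Utau Esegᶜ := by
  refine ContinuousOn.congr ?_ fun z hz => Utau_eq hz
  refine continuousOn_const.sub (continuousOn_phi.norm.log fun z hz => ?_)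
  exact (one_pos.trans (one_lt_norm_phi hz)).ne'

variable {F : Set ℝ}

lemma continuousOn_integral_log_norm_one_sub_phi_mul {μ : Measure ℝ}
    [IsFiniteMeasure μ] (hFc : IsCompact F) (hFE : ∀ x ∈ F, x ∉ Icc (-1 : ℝ) 1)
    (hμ : ∀ᵐ t ∂μ, t ∈ F) :
    ContinuousOn (fun z => ∫ t, Real.log ‖1 - phi z * phi t‖ ∂μ) Esegᶜ := by
  refine continuousOn_integral_of_continuousOn_prod isClosed_Eseg.isOpen_compl hFc hμ ?_
  have h1 : ContinuousOn (fun p : ℂ × ℝ => phi p.1) (Esegᶜ ×ˢ F) :=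
    continuousOn_phi.comp continuousOn_fst fun p hp => hp.1
  have h2 : ContinuousOn (fun p : ℂ × ℝ => phi p.2) (Esegᶜ ×ˢ F) :=
    continuousOn_phi.comp (continuous_ofReal.comp continuous_snd).continuousOn
      fun p hp => ofReal_notMem_Eseg (hFE _ hp.2)
  refine (continuousOn_const.sub (h1.mul h2)).norm.log fun p hp => ?_
  exact norm_ne_zero_iff.2 (one_sub_phi_mul_ne_zero hp.1 (ofReal_notMem_Eseg (hFE _ hp.2)))

lemma eqOn_compl_Eseg_of_forall_im_ne_zero {f g : ℂ → ℝ} (hf : ContinuousOn f Esegᶜ)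
    (hg : ContinuousOn g Esegᶜ) (h : ∀ z : ℂ, z.im ≠ 0 → f z = g z) :
    EqOn f g Esegᶜ := by
  refine EqOn.of_subset_closure (s := im ⁻¹' {0}ᶜ) (fun z hz => h z hz) hf hg
    (fun z hz => notMem_Eseg_of_im_ne_zero hz) ?_
  rw [closure_preimage_im, closure_compl_singleton, preimage_univ]
  exact subset_univ _

lemma two_mul_integral_log_norm_one_sub_phi_mul {μ : Measure ℝ}
    [IsProbabilityMeasure μ] (hFc : IsCompact F) (hFE : ∀ x ∈ F, x ∉ Icc (-1 : ℝ) 1)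
    (hμ : ∀ᵐ t ∂μ, t ∈ F) (hz : z.im ≠ 0) :
    2 * ∫ t, Real.log ‖1 - phi z * phi t‖ ∂μ =
      (∫ t, gE z t ∂μ) + Real.log 2 - Upot μ z + Real.log ‖phi z‖ +
        ∫ t, Real.log ‖phi t‖ ∂μ := by
  have hzE := notMem_Eseg_of_im_ne_zero hz
  have htE {t : ℝ} (ht : t ∈ F) : (t : ℂ) ∉ Eseg := ofReal_notMem_Eseg (hFE t ht)
  have hφF : ContinuousOn (fun t : ℝ => phi t) F :=
    continuousOn_phi.comp continuous_ofReal.continuousOn fun t ht => htE ht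
  have hzt (t : ℝ) : z ≠ t := fun h => hz (by simp [h])
  have hv : Integrable (fun t : ℝ => Real.log ‖1 - phi z * phi t‖) μ :=
    ((continuousOn_const.sub (continuousOn_const.mul hφF)).norm.log fun t ht =>
      norm_ne_zero_iff.2 (one_sub_phi_mul_ne_zero hzE (htE ht))).integrable_of_ae_mem hFc hμ
  have hU : Integrable (fun t : ℝ => Real.log ‖z - t‖) μ :=
    ((continuousOn_const.sub continuous_ofReal.continuousOn).norm.log fun t _ =>
      norm_ne_zero_iff.2 (sub_ne_zero.2 (hzt t))).integrable_of_ae_mem hFc hμ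
  have hK : Integrable (fun t : ℝ => Real.log ‖phi t‖) μ :=
    (hφF.norm.log fun t ht => norm_ne_zero_iff.2 (phi_ne_zero (htE ht))).integrable_of_ae_mem
      hFc hμ
  have hsplit : (fun t : ℝ => gE z t) =ᵐ[μ] fun t => 2 * Real.log ‖1 - phi z * phi t‖ -
      Real.log 2 - Real.log ‖z - t‖ - Real.log ‖phi z‖ - Real.log ‖phi t‖ := by
    filter_upwards [hμ] with t ht
    have := two_mul_log_norm_one_sub_phi_mul hzE (htE ht) (hzt t)
    linarith
  have hUpot : Upot μ z = -∫ t, Real.log ‖z - t‖ ∂μ := by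
    simp only [Upot, one_div, Real.log_inv, integral_neg]
  rw [integral_congr_ae hsplit, integral_sub (by fun_prop) hK,
    integral_sub (by fun_prop) (integrable_const _), integral_sub (by fun_prop) hU,
    integral_sub (by fun_prop) (integrable_const _), integral_const_mul, integral_const,
    integral_const, probReal_univ, hUpot]
  simp only [smul_eq_mul, one_mul]
  ring

end Joukowsky

open Joukowsky

/-- Let `μ` be a probability measure on a compact `F ⊂ ℝ \ [-1,1]` and let `ν = β_E(μ)` be
its balayage onto `E = [-1,1]`, characterized by `G^μ_E = U^μ - U^ν + const` off `E`.
Then `v(z;μ) := ∫ log|1 - φ(z)φ(t)| dμ(t) = -(1/2) U^{ν + τ_E}(z) + C` on `ℂ \ [-1,1]`. -/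
theorem statement19 (F : Set ℝ) (hFc : IsCompact F)
    (hFE : ∀ x ∈ F, x ∉ Set.Icc (-1 : ℝ) 1)
    (μ ν : Measure ℝ) [IsProbabilityMeasure μ] [IsProbabilityMeasure ν]
    (hμF : μ F = 1) (hνE : ν (Set.Icc (-1 : ℝ) 1) = 1)
    (hbal : ∃ c₀ : ℝ, ∀ z : ℂ, z ∉ Eseg →
      (∫ t, gE z (t : ℂ) ∂μ) = Upot μ z - Upot ν z + c₀) :
    ∃ C : ℝ, ∀ z : ℂ, z ∉ Eseg →
      (∫ t, Real.log (‖1 - phi z * phi (t : ℂ)‖) ∂μ) =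
        -(1 / 2) * (Upot ν z + Utau z) + C := by
  obtain ⟨c₀, hbal⟩ := hbal
  have hμ : ∀ᵐ t ∂μ, t ∈ F :=
    (ae_mem_iff_measure_eq hFc.measurableSet.nullMeasurableSet).2 (by rw [hμF, measure_univ])
  have hν : ∀ᵐ t ∂ν, t ∈ Icc (-1 : ℝ) 1 :=
    (ae_mem_iff_measure_eq measurableSet_Icc.nullMeasurableSet).2 (by rw [hνE, measure_univ])
  refine ⟨(c₀ + 2 * Real.log 2 + ∫ t, Real.log ‖phi t‖ ∂μ) / 2, fun z hz => ?_⟩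
  refine eqOn_compl_Eseg_of_forall_im_ne_zero
    (continuousOn_integral_log_norm_one_sub_phi_mul hFc hFE hμ)
    ((continuousOn_const.mul ((continuousOn_Upot hν).add continuousOn_Utau)).add
      continuousOn_const)
    (fun w hw => ?_) hz
  have hwE := notMem_Eseg_of_im_ne_zero hw
  have h2v := two_mul_integral_log_norm_one_sub_phi_mul hFc hFE hμ hw
  rw [hbal w hwE] at h2v
  simp only [Pi.add_apply, Pi.mul_apply, Utau_eq hwE]
  linarith
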